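/- arXiv:1401.2360 — 2 statements merged into one kernel-verified Lean document; each statement's English description precedes it below -/
import Mathlib

section
/- For every natural number n ≥ 8, there are exactly fifteen (n−3)-dimensional numbers in the 2^n space; that is, T(n, n−3) = 15. -/
/-!
Doubling `m ↦ 2 * m` maps the numbers in `[1, 2^n]` of dimension `d` injectively into those in
`[1, 2^(n+1)]` of dimension `d + 1`, and it is onto as soon as `2^(n+1) < 3^(d+1)`: an odd number
of dimension `d + 1` is at least `3^(d+1)`. For `d = n - 3 ≥ 5` this inequality holds, so
`T n (n - 3)` does not depend on `n ≥ 8`, and `T 8 5 = 15` is a finite computation.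
-/

/-- The dimension of a natural number: the number of prime factors counted with multiplicity. -/
def dimension (m : ℕ) : ℕ := m.primeFactorsList.length

/-- `T n d` is the number of natural numbers `m` with `1 ≤ m ≤ 2^n` and dimension `d`. -/
def T (n d : ℕ) : ℕ :=
  ((Finset.Icc 1 (2 ^ n)).filter (fun m => dimension m = d)).card

lemma dimension_mul {a b : ℕ} (ha : a ≠ 0) (hb : b ≠ 0) :
    dimension (a * b) = dimension a + dimension b := by
  simpa only [dimension, ArithmeticFunction.cardFactors_apply] using
    ArithmeticFunction.cardFactors_mul ha hb

lemma dimension_two_mul {m : ℕ} (hm : m ≠ 0) : dimension (2 * m) = dimension m + 1 := by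
  rw [dimension_mul two_ne_zero hm, add_comm]
  simp [dimension, Nat.primeFactorsList_prime Nat.prime_two]

lemma three_pow_dimension_le_of_odd {m : ℕ} (hm : Odd m) : 3 ^ dimension m ≤ m := by
  have hm0 : m ≠ 0 := by rintro rfl; exact Nat.not_odd_zero hm
  calc 3 ^ dimension m ≤ m.primeFactorsList.prod := by
        refine List.pow_card_le_prod _ _ fun p hp => ?_
        have hpm := Nat.dvd_of_mem_primeFactorsList hp
        rcases (Nat.prime_of_mem_primeFactorsList hp).eq_two_or_odd' with rfl | hodd
        · exact absurd (even_iff_two_dvd.mpr hpm) (Nat.not_even_iff_odd.mpr hm)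
        · have := (Nat.prime_of_mem_primeFactorsList hp).two_le
          rcases hodd with ⟨k, rfl⟩
          omega
    _ = m := Nat.prod_primeFactorsList hm0

lemma T_succ_succ {n d : ℕ} (h : 2 ^ (n + 1) < 3 ^ (d + 1)) : T (n + 1) (d + 1) = T n d := by
  unfold T
  suffices hset : (Finset.Icc 1 (2 ^ (n + 1))).filter (fun m => dimension m = d + 1) =
      ((Finset.Icc 1 (2 ^ n)).filter (fun m => dimension m = d)).image (2 * ·) by
    rw [hset, Finset.card_image_of_injective _ (mul_right_injective₀ two_ne_zero)]
  ext m
  simp only [Finset.mem_filter, Finset.mem_Icc, Finset.mem_image]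
  constructor
  · rintro ⟨⟨hm1, hm2⟩, hdim⟩
    obtain ⟨k, rfl⟩ : Even m := by
      by_contra hodd
      have := three_pow_dimension_le_of_odd (Nat.not_even_iff_odd.mp hodd)
      rw [hdim] at this
      omega
    have hk0 : k ≠ 0 := by omega
    refine ⟨k, ⟨⟨by omega, ?_⟩, ?_⟩, by ring⟩
    · rw [pow_succ] at hm2
      omega
    · rw [← two_mul, dimension_two_mul hk0] at hdim
      omega
  · rintro ⟨k, ⟨⟨hk1, hk2⟩, hdim⟩, rfl⟩
    refine ⟨⟨by omega, ?_⟩, by rw [dimension_two_mul (by omega), hdim]⟩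
    rw [pow_succ]
    omega

lemma two_pow_add_four_lt_three_pow_succ {d : ℕ} (hd : 5 ≤ d) : 2 ^ (d + 4) < 3 ^ (d + 1) := by
  induction d, hd using Nat.le_induction with
  | base => norm_num
  | succ d _ ih =>
    rw [pow_succ 2, pow_succ 3]
    omega

lemma T_add_three_self {d : ℕ} (hd : 5 ≤ d) : T (d + 3) d = 15 := by
  induction d, hd using Nat.le_induction with
  | base => decide +kernel
  | succ d hd ih => rw [T_succ_succ (two_pow_add_four_lt_three_pow_succ hd), ih]

/-- For n ≥ 8 there are exactly fifteen (n−3)-dimensional numbers in the 2^n space. -/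
theorem sub_three_dim_count (n : ℕ) (hn : 8 ≤ n) : T n (n - 3) = 15 := by
  obtain ⟨d, rfl⟩ : ∃ d, n = d + 3 := ⟨n - 3, by omega⟩
  simpa using T_add_three_self (d := d) (by omega)
end

section
/- For every natural number x ≥ 0, the diagonal series n ↦ T(n, n−x) is eventually constant: there exist natural numbers N and c such that T(n, n−x) = c for all n ≥ N. (In any sufficiently large 2^n space, the count of (n−x)-dimensional numbers is fixed regardless of the space size.) -/
lemma dim_double (m : ℕ) (hm : m ≠ 0) : dimension (2 * m) = dimension m + 1 := by
  unfold dimension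
  rw [(Nat.perm_primeFactorsList_mul (by norm_num) hm).length_eq]
  simp [Nat.primeFactorsList_prime Nat.prime_two, Nat.add_comm]

lemma odd_lb (m : ℕ) (hm : m ≠ 0) (hodd : ¬ 2 ∣ m) : 3 ^ dimension m ≤ m := by
  conv_rhs => rw [← Nat.prod_primeFactorsList hm]
  apply List.pow_card_le_prod
  intro p hp
  have hp' := (Nat.prime_of_mem_primeFactorsList hp).two_le
  have hdvd : p ∣ m := Nat.dvd_of_mem_primeFactorsList hp
  have : p ≠ 2 := fun h => hodd (h ▸ hdvd)
  omega

lemma pow_ineq (x k : ℕ) (hk : 2 * x + 2 ≤ k) : 2 ^ (k + x) < 3 ^ k := by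
  obtain ⟨r, rfl⟩ := le_iff_exists_add.mp hk
  have h1 : (2:ℕ) ^ (2 * x + 2 + r + x) < 2 ^ (3 * x + 3 + r) :=
    Nat.pow_lt_pow_right (by norm_num) (by omega)
  have h2 : (2:ℕ) ^ (3 * x + 3 + r) = 8 ^ (x + 1) * 2 ^ r := by
    rw [show (8:ℕ) = 2 ^ 3 from rfl, ← pow_mul, ← pow_add]
    ring_nf
  have h3 : (8:ℕ) ^ (x + 1) * 2 ^ r ≤ 9 ^ (x + 1) * 3 ^ r :=
    Nat.mul_le_mul (Nat.pow_le_pow_left (by norm_num) _) (Nat.pow_le_pow_left (by norm_num) _)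
  have h4 : (9:ℕ) ^ (x + 1) * 3 ^ r = 3 ^ (2 * x + 2 + r) := by
    rw [show (9:ℕ) = 3 ^ 2 from rfl, ← pow_mul, ← pow_add]
    ring_nf
  omega

lemma step (x n : ℕ) (hn : 3 * x + 1 ≤ n) : T n (n - x) = T (n + 1) (n + 1 - x) := by
  have hxn : x ≤ n := by omega
  unfold T
  refine Finset.card_bij' (fun m _ => 2 * m) (fun m _ => m / 2) ?_ ?_ ?_ ?_
  · intro m hm
    simp only [Finset.mem_filter, Finset.mem_Icc] at hm ⊢
    obtain ⟨⟨h1, h2⟩, h3⟩ := hm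
    refine ⟨⟨by omega, by rw [pow_succ]; omega⟩, ?_⟩
    rw [dim_double m (by omega), h3]
    omega
  · intro m hm
    simp only [Finset.mem_filter, Finset.mem_Icc] at hm ⊢
    obtain ⟨⟨h1, h2⟩, h3⟩ := hm
    have heven : 2 ∣ m := by
      by_contra hodd
      have hlb := odd_lb m (by omega) hodd
      rw [h3] at hlb
      have hpi := pow_ineq x (n + 1 - x) (by omega)
      rw [show n + 1 - x + x = n + 1 from by omega] at hpi
      omega
    obtain ⟨k, rfl⟩ := heven
    have hk : k ≠ 0 := by omega
    have hd := dim_double k hk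
    rw [Nat.mul_div_cancel_left k (by norm_num)]
    rw [pow_succ] at h2
    exact ⟨⟨by omega, by omega⟩, by omega⟩
  · intro m _
    simp only [Nat.mul_div_cancel_left m (by norm_num : 0 < 2)]
  · intro m hm
    simp only [Finset.mem_filter, Finset.mem_Icc] at hm
    obtain ⟨⟨h1, h2⟩, h3⟩ := hm
    have heven : 2 ∣ m := by
      by_contra hodd
      have hlb := odd_lb m (by omega) hodd
      rw [h3] at hlb
      have hpi := pow_ineq x (n + 1 - x) (by omega)
      rw [show n + 1 - x + x = n + 1 from by omega] at hpi
      omega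
    show 2 * (m / 2) = m
    omega
/-- Each diagonal series n ↦ T(n, n−x) is eventually constant. -/
theorem diagonal_eventually_constant (x : ℕ) :
    ∃ N c : ℕ, ∀ n : ℕ, N ≤ n → T n (n - x) = c := by
  refine ⟨3 * x + 1, T (3 * x + 1) (3 * x + 1 - x), ?_⟩
  intro n hn
  induction n, hn using Nat.le_induction with
  | base => rfl
  | succ n hn ih => rw [← step x n hn, ih]
end
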